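/- Let s_1 = 1 < s_2 < ⋯ enumerate the Furstenberg set S in increasing order. Then there are infinitely many indices n such that (s_{n+1} − s_n)/s_n ≤ (2 log 2 · log 3)/log s_n. -/

import Mathlib

/-!
Since `log 3 / log 2` is irrational, Dirichlet's theorem yields arbitrarily large `k` with
`|k log 3 - j log 2| < log 2 / k`. The numbers `2^j` and `3^k` of the Furstenberg set then have
logarithms closer than `log 2 / k`, so by `e^t - 1 ≤ 2t` the smaller one, `s ≤ 3^k`, has relative
gap at most `2 log 2 / k ≤ 2 log 2 log 3 / log s`; its successor in the set is even closer.
-/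

open Real

theorem Irrational.exists_nat_gt_abs_mul_sub_lt {ξ : ℝ} (hξ : Irrational ξ) (K : ℕ) :
    ∃ (k : ℕ) (j : ℤ), K < k ∧ |k * ξ - j| < 1 / k := by
  -- rationals of denominator at most `K` keep away from `ξ`, so a fine Dirichlet approximation
  -- must have a larger denominator
  obtain ⟨ε, hε, hsep⟩ : ∃ ε > 0, ∀ k ≤ K, ∀ m : ℤ, ε ≤ dist ξ (m / k) := by
    obtain ⟨δ, hδ, h⟩ :=
      Metric.eventually_nhds_iff.1 (hξ.eventually_forall_le_dist_cast_div_of_denom_le K)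
    exact ⟨δ / 2, half_pos hδ, h (by rw [Real.dist_0_eq_abs, abs_of_pos (half_pos hδ)]; linarith)⟩
  obtain ⟨n, hn⟩ := exists_nat_one_div_lt hε
  obtain ⟨k, hk0, hkn, hk⟩ := Real.exists_nat_abs_mul_sub_round_le ξ n.succ_pos
  have hk1 : (1 : ℝ) ≤ k := by exact_mod_cast hk0
  have hkn' : (k : ℝ) ≤ n + 1 := by exact_mod_cast hkn
  have hbound : |k * ξ - round (k * ξ)| < 1 / (n + 1) :=
    hk.trans_lt (by push_cast; gcongr; linarith)
  refine ⟨k, round (k * ξ), ?_, hbound.trans_le (by gcongr)⟩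
  by_contra! hkK
  have hdist : |k * ξ - round (k * ξ)| = dist ξ (round (k * ξ) / k) * k :=
    calc |k * ξ - round (k * ξ)| = |(ξ - round (k * ξ) / k) * k| := by congr 1; field_simp
      _ = dist ξ (round (k * ξ) / k) * k := by rw [abs_mul, Nat.abs_cast, Real.dist_eq]
  have hfar := hsep k hkK (round (k * ξ))
  nlinarith [dist_nonneg (x := ξ) (y := round (k * ξ) / k)]

theorem irrational_log_div_log {a b : ℕ} (ha : 1 < a) (hb : 1 < b) (hab : a.Coprime b) :
    Irrational (log b / log a) := by
  rintro ⟨q, hq⟩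
  have hloga : 0 < log a := log_pos (by exact_mod_cast ha)
  have hlogb : 0 < log b := log_pos (by exact_mod_cast hb)
  have hq0 : 0 < q := by exact_mod_cast (hq ▸ div_pos hlogb hloga : (0 : ℝ) < q)
  obtain ⟨m, hm⟩ := Int.eq_ofNat_of_zero_le (Rat.num_pos.2 hq0).le
  have hlog : log ((b : ℝ) ^ q.den) = log ((a : ℝ) ^ m) := by
    rw [Real.log_pow, Real.log_pow, ← div_eq_iff hloga.ne', mul_div_assoc, ← hq, Rat.cast_def, hm]
    push_cast
    field_simp
  have hpow : b ^ q.den = a ^ m := by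
    exact_mod_cast log_injOn_pos (Set.mem_Ioi.2 (by positivity)) (Set.mem_Ioi.2 (by positivity)) hlog
  have hm0 : m ≠ 0 := by
    rintro rfl
    exact hq0.ne' (Rat.num_eq_zero.1 (by simpa using hm))
  have hcop : (a ^ m).Coprime (a ^ m) := hpow ▸ (hab.pow m q.den).symm
  exact (Nat.one_lt_pow hm0 ha).ne' ((Nat.coprime_self _).1 hcop)

theorem sub_div_le_two_mul_of_log_sub_le {x y δ : ℝ} (hx : 0 < x) (hxy : x ≤ y)
    (hδ : log y - log x ≤ δ) (hδ1 : δ ≤ 1) : (y - x) / x ≤ 2 * δ := by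
  have hlog : 0 ≤ log y - log x := sub_nonneg.2 (log_le_log hx hxy)
  have hexp : (y - x) / x = exp (log y - log x) - 1 := by
    rw [exp_sub, exp_log hx, exp_log (hx.trans_le hxy), sub_div, div_self hx.ne']
  calc (y - x) / x ≤ |exp (log y - log x) - 1| := hexp ▸ le_abs_self _
    _ ≤ 2 * |log y - log x| := abs_exp_sub_one_le (by rw [abs_of_nonneg hlog]; linarith)
    _ ≤ 2 * δ := by rw [abs_of_nonneg hlog]; linarith

theorem Nat.nth_count_succ_le {p : ℕ → Prop} [DecidablePred p] {a b : ℕ} (ha : p a) (hb : p b)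
    (hab : a < b) : nth p (count p a + 1) ≤ b := by
  rw [← count_succ_eq_succ_count_iff.2 ha, nth_count_eq_sInf]
  exact Nat.sInf_le ⟨hb, hab⟩

theorem Nat.exists_le_nth_succ_sub_nth_div_le {p : ℕ → Prop} (hp : {n | p n}.Infinite)
    (g : ℕ → ℝ) (h : ∀ M, ∃ x y, p x ∧ p y ∧ M ≤ x ∧ x < y ∧ ((y : ℝ) - x) / x ≤ g x) (N : ℕ) :
    ∃ n, N ≤ n ∧ ((nth p (n + 1) : ℝ) - nth p n) / nth p n ≤ g (nth p n) := by
  classical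
  obtain ⟨x, y, hx, hy, hNx, hxy, hgap⟩ := h (nth p N)
  refine ⟨count p x, ?_, ?_⟩
  · exact count_nth_of_infinite hp N ▸ count_monotone p hNx
  · rw [nth_count hx]
    have hsucc : nth p (count p x + 1) ≤ y := nth_count_succ_le hx hy hxy
    refine le_trans ?_ hgap
    gcongr

def IsPowMulPow (a b m : ℕ) : Prop := ∃ j k : ℕ, m = a ^ j * b ^ k

theorem IsPowMulPow.infinite_setOf {a : ℕ} (ha : 1 < a) (b : ℕ) :
    {m | IsPowMulPow a b m}.Infinite :=
  Set.infinite_of_injective_forall_mem (Nat.pow_right_injective ha) fun j => ⟨j, 0, by simp⟩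

theorem exists_pow_pow_log_close {a b : ℕ} (ha : 1 < a) (hab : a < b) (hcop : a.Coprime b)
    (K : ℕ) : ∃ j k : ℕ, K < k ∧ k ≤ j ∧ |k * log b - j * log a| < log a / k := by
  have hloga : 0 < log a := log_pos (by exact_mod_cast ha)
  have hlogab : log a < log b := log_lt_log (by positivity) (by exact_mod_cast hab)
  obtain ⟨k, j, hKk, hkj⟩ :=
    (irrational_log_div_log ha (ha.trans hab) hcop).exists_nat_gt_abs_mul_sub_lt K
  have hk : (1 : ℝ) ≤ k := by exact_mod_cast (show 1 ≤ k by omega)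
  have hkj1 : (k : ℝ) - 1 < j := by
    have hξ : 1 < log b / log a := (one_lt_div hloga).2 hlogab
    have hj := (abs_lt.1 hkj).2
    have hk_inv : 1 / (k : ℝ) ≤ 1 := div_le_one_of_le₀ hk (by positivity)
    nlinarith [mul_lt_mul_of_pos_left hξ (by positivity : (0 : ℝ) < k)]
  have hjk : (k : ℤ) ≤ j := by
    have : (k : ℤ) - 1 < j := by exact_mod_cast hkj1
    omega
  lift j to ℕ using (by omega)
  push_cast at hkj
  refine ⟨j, k, hKk, by exact_mod_cast hjk, ?_⟩
  calc |k * log b - j * log a| = |log a * (k * (log b / log a) - j)| := by congr 1; field_simp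
    _ = log a * |k * (log b / log a) - j| := by rw [abs_mul, abs_of_pos hloga]
    _ < log a * (1 / k) := mul_lt_mul_of_pos_left hkj hloga
    _ = log a / k := mul_one_div _ _

theorem exists_isPowMulPow_sub_div_le {a b : ℕ} (ha : 1 < a) (hab : a < b) (hcop : a.Coprime b)
    (M : ℕ) : ∃ x y, IsPowMulPow a b x ∧ IsPowMulPow a b y ∧ M ≤ x ∧ x < y ∧
      ((y : ℝ) - x) / x ≤ 2 * log a * log b / log x := by
  obtain ⟨j, k, hk, hkj, hclose⟩ := exists_pow_pow_log_close ha hab hcop (max M a)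
  have hak : log a ≤ k :=
    (log_le_self (by positivity)).trans (by exact_mod_cast (le_max_right M a).trans hk.le)
  have hlogb : 0 < log b := log_pos (by exact_mod_cast ha.trans hab)
  have hxk : 2 ^ k ≤ a ^ j := (Nat.pow_le_pow_left ha k).trans (Nat.pow_le_pow_right (by omega) hkj)
  have hyk : 2 ^ k ≤ b ^ k := Nat.pow_le_pow_left (by omega) k
  have hMk : M < 2 ^ k := (le_max_left M a).trans_lt (hk.trans k.lt_two_pow_self)
  have hlogx : log (a ^ j : ℕ) = j * log a := by push_cast; exact Real.log_pow _ _
  have hlogy : log (b ^ k : ℕ) = k * log b := by push_cast; exact Real.log_pow _ _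
  have hxy : a ^ j ≠ b ^ k := by
    intro h
    have hcop' : (a ^ j).Coprime (a ^ j) := by simpa [h] using hcop.pow j k
    exact (Nat.one_lt_pow (by omega) ha).ne' ((Nat.coprime_self _).1 hcop')
  have gap {x y : ℕ} (hx : 2 ^ k ≤ x) (hxy : x ≤ y) (hxb : log x ≤ k * log b)
      (hyx : log y - log x < log a / k) :
      ((y : ℝ) - x) / x ≤ 2 * log a * log b / log x := by
    have hx1 : (1 : ℝ) < x := by exact_mod_cast (Nat.one_lt_two_pow (by omega)).trans_le hx
    calc ((y : ℝ) - x) / x ≤ 2 * (log a / k) :=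
          sub_div_le_two_mul_of_log_sub_le (by positivity) (by exact_mod_cast hxy) hyx.le
            (div_le_one_of_le₀ hak (by positivity))
      _ = 2 * log a * log b / (k * log b) := by field_simp
      _ ≤ 2 * log a * log b / log x := by gcongr; exact log_pos hx1
  rcases hxy.lt_or_gt with h | h
  · refine ⟨a ^ j, b ^ k, ⟨j, 0, by simp⟩, ⟨0, k, by simp⟩, by omega, h, gap hxk h.le ?_ ?_⟩
    · exact hlogy ▸ log_le_log (by positivity) (by exact_mod_cast h.le)
    · exact hlogx ▸ hlogy ▸ (abs_lt.1 hclose).2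
  · refine ⟨b ^ k, a ^ j, ⟨0, k, by simp⟩, ⟨j, 0, by simp⟩, by omega, h, gap hyk h.le hlogy.le ?_⟩
    exact hlogx ▸ hlogy ▸ (abs_sub_lt_iff.1 hclose).2

/-- **Small gaps in the Furstenberg sequence.**
If `s_0 < s_1 < ⋯` enumerates the Furstenberg set `S = {2^j 3^k}` in increasing
order, then for infinitely many indices `n` one has
`(s_{n+1} - s_n)/s_n ≤ (2 log 2 · log 3)/log s_n`. -/
theorem furstenberg_small_gaps :
    ∀ N : ℕ, ∃ n : ℕ, N ≤ n ∧
      ((Nat.nth (fun m : ℕ => ∃ j k : ℕ, m = 2 ^ j * 3 ^ k) (n + 1) : ℝ)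
          - (Nat.nth (fun m : ℕ => ∃ j k : ℕ, m = 2 ^ j * 3 ^ k) n : ℝ))
        / (Nat.nth (fun m : ℕ => ∃ j k : ℕ, m = 2 ^ j * 3 ^ k) n : ℝ)
      ≤ 2 * Real.log 2 * Real.log 3
        / Real.log (Nat.nth (fun m : ℕ => ∃ j k : ℕ, m = 2 ^ j * 3 ^ k) n) :=
  Nat.exists_le_nth_succ_sub_nth_div_le (IsPowMulPow.infinite_setOf one_lt_two 3)
    (fun x => 2 * log 2 * log 3 / log x)
    (by exact_mod_cast exists_isPowMulPow_sub_div_le one_lt_two (by norm_num) (by norm_num))
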